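/- arXiv:2503.16066 — 3 statements merged into one kernel-verified Lean document; each statement's English description precedes it below -/
import Mathlib

section
/- For angles φ₁, φ₂ ∈ [-φₘ, φₘ] with 0 < φₘ ≤ π/18, and any angle δ, the quantity A = cos(δ)·cos(φ₁)·cos(φ₂) + sin(φ₁)·sin(φ₂) satisfies A ≤ (cos(δ) - 1)·cos²(φₘ) + 1. -/
/-! Since `cos (φ₁ - φ₂) ≤ 1`, the quantity is at most `(cos δ - 1) cos φ₁ cos φ₂ + 1`; as
`cos δ - 1 ≤ 0`, it remains to bound `cos φ₁ cos φ₂` below by `cos² φₘ`, which holds because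
cosine is even and decreasing on `[0, φₘ] ⊆ [0, π/2]`, where it is nonnegative. -/

open Real

namespace Real

theorem cos_le_cos_of_abs_le {x a : ℝ} (hx : |x| ≤ a) (ha : a ≤ π) : cos a ≤ cos x := by
  rw [← cos_abs x]
  exact cos_le_cos_of_nonneg_of_le_pi (abs_nonneg x) ha hx

theorem cos_sq_le_cos_mul_cos {x y a : ℝ} (hx : |x| ≤ a) (hy : |y| ≤ a) (ha : a ≤ π / 2) :
    cos a ^ 2 ≤ cos x * cos y := by
  have hpi : a ≤ π := ha.trans (by linarith [pi_pos])
  have ha₀ : 0 ≤ cos a :=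
    cos_nonneg_of_mem_Icc ⟨by linarith [(abs_nonneg x).trans hx, pi_pos], ha⟩
  rw [sq]
  exact mul_le_mul (cos_le_cos_of_abs_le hx hpi) (cos_le_cos_of_abs_le hy hpi) ha₀
    (ha₀.trans (cos_le_cos_of_abs_le hx hpi))

theorem cos_mul_cos_mul_cos_add_sin_mul_sin_le (δ x y : ℝ) :
    cos δ * cos x * cos y + sin x * sin y ≤ (cos δ - 1) * (cos x * cos y) + 1 := by
  have h := cos_le_one (x - y)
  rw [cos_sub] at h
  linarith

end Real

theorem length_constraint_upper_bound_general
    (φm φ1 φ2 δ : ℝ) (hφm' : φm ≤ π / 18)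
    (h1 : φ1 ∈ Set.Icc (-φm) φm) (h2 : φ2 ∈ Set.Icc (-φm) φm) :
    cos δ * cos φ1 * cos φ2 + sin φ1 * sin φ2 ≤ (cos δ - 1) * (cos φm) ^ 2 + 1 := by
  have hm : φm ≤ π / 2 := hφm'.trans (by linarith [pi_pos])
  have hcos : cos φm ^ 2 ≤ cos φ1 * cos φ2 :=
    cos_sq_le_cos_mul_cos (abs_le.mpr h1) (abs_le.mpr h2) hm
  have hδ : cos δ - 1 ≤ 0 := sub_nonpos.mpr (cos_le_one δ)
  calc cos δ * cos φ1 * cos φ2 + sin φ1 * sin φ2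
      ≤ (cos δ - 1) * (cos φ1 * cos φ2) + 1 := cos_mul_cos_mul_cos_add_sin_mul_sin_le δ φ1 φ2
    _ ≤ (cos δ - 1) * cos φm ^ 2 + 1 := by linarith [mul_le_mul_of_nonpos_left hcos hδ]

theorem length_constraint_upper_bound
    (φm φ1 φ2 δ : ℝ) (hφm : 0 < φm) (hφm' : φm ≤ π / 18)
    (h1 : φ1 ∈ Set.Icc (-φm) φm) (h2 : φ2 ∈ Set.Icc (-φm) φm) :
    cos δ * cos φ1 * cos φ2 + sin φ1 * sin φ2 ≤ (cos δ - 1) * (cos φm) ^ 2 + 1 :=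
  length_constraint_upper_bound_general φm φ1 φ2 δ hφm' h1 h2
end

section
/- For angles φ₁, φ₂ ∈ [-φₘ, φₘ] with 0 < φₘ ≤ π/18, the upper bound (cos(δ)-1)·cos²(φₘ) + 1 on A = cos(δ)cos(φ₁)cos(φ₂) + sin(φ₁)sin(φ₂) is attained exactly when φ₁ = φ₂ and |φ₁| = φₘ, provided cos(δ) < 1; when cos(δ) = 1 the maximum value 1 is attained whenever φ₁ = φ₂. -/
/-!
Writing `c = cos δ`, the gap between the bound and `A` splits as
`(1 - cos (φ₁ - φ₂)) + (1 - c) (cos φ₁ cos φ₂ - cos² φₘ)`.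
Both summands are nonnegative since `c ≤ 1` and `0 ≤ cos φₘ ≤ cos φᵢ` for `|φᵢ| ≤ φₘ < π/2`,
so the bound is attained iff both vanish: the first forces `φ₁ = φ₂`, and then, when `c < 1`,
the second forces `cos φ₁ = cos φₘ`, i.e. `|φ₁| = φₘ` by injectivity of `cos` on `[0, π]`.
-/

open Real

namespace Real

lemma cos_le_cos_of_abs_le_s2 {x y : ℝ} (hy : y ≤ π) (h : |x| ≤ y) : cos y ≤ cos x := by
  rw [← cos_abs x]
  exact cos_le_cos_of_nonneg_of_le_pi (abs_nonneg x) hy h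

lemma cos_eq_cos_iff_abs_eq {x y : ℝ} (hy : y ≤ π) (h : |x| ≤ y) : cos x = cos y ↔ |x| = y := by
  rw [← cos_abs x]
  refine ⟨fun hxy => injOn_cos ⟨abs_nonneg x, h.trans hy⟩ ⟨(abs_nonneg x).trans h, hy⟩ hxy,
    fun hxy => by rw [hxy]⟩

lemma cos_sub_eq_one_iff {x y : ℝ} (hx : |x| < π) (hy : |y| < π) : cos (x - y) = 1 ↔ x = y := by
  rw [abs_lt] at hx hy
  rw [cos_eq_one_iff_of_lt_of_lt (by linarith) (by linarith), sub_eq_zero]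

end Real

lemma length_bound_sub_eq (c φm φ1 φ2 : ℝ) :
    (c - 1) * cos φm ^ 2 + 1 - (c * cos φ1 * cos φ2 + sin φ1 * sin φ2) =
      (1 - cos (φ1 - φ2)) + (1 - c) * (cos φ1 * cos φ2 - cos φm ^ 2) := by
  rw [cos_sub]
  ring

theorem length_constraint_max_attainment_general
    (φm φ1 φ2 δ : ℝ) (hφm' : φm ≤ π / 18)
    (h1 : φ1 ∈ Set.Icc (-φm) φm) (h2 : φ2 ∈ Set.Icc (-φm) φm) :
    (cos δ < 1 →
      (cos δ * cos φ1 * cos φ2 + sin φ1 * sin φ2 = (cos δ - 1) * (cos φm) ^ 2 + 1 ↔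
        φ1 = φ2 ∧ |φ1| = φm)) ∧
    (cos δ = 1 → φ1 = φ2 →
      cos δ * cos φ1 * cos φ2 + sin φ1 * sin φ2 = 1) := by
  have hπ := pi_pos
  have habs1 : |φ1| ≤ φm := abs_le.mpr h1
  have habs2 : |φ2| ≤ φm := abs_le.mpr h2
  have hφm_pi : φm ≤ π := by linarith
  have hcos_φm : 0 < cos φm :=
    cos_pos_of_mem_Ioo ⟨by linarith [(abs_nonneg φ1).trans habs1], by linarith⟩
  have hcos1 := cos_le_cos_of_abs_le_s2 hφm_pi habs1
  have hcos2 := cos_le_cos_of_abs_le_s2 hφm_pi habs2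
  refine ⟨fun hδ => ?_, fun hδ h12 => ?_⟩
  · have hdiff : 0 ≤ 1 - cos (φ1 - φ2) := sub_nonneg.mpr (cos_le_one _)
    have hprod : cos φm ^ 2 ≤ cos φ1 * cos φ2 := by
      rw [sq]; exact mul_le_mul hcos1 hcos2 hcos_φm.le (hcos_φm.le.trans hcos1)
    rw [eq_comm, ← sub_eq_zero, length_bound_sub_eq,
      add_eq_zero_iff_of_nonneg hdiff (mul_nonneg (by linarith) (sub_nonneg.mpr hprod)),
      sub_eq_zero, eq_comm, cos_sub_eq_one_iff (by linarith) (by linarith)]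
    refine and_congr_right fun h12 => ?_
    subst h12
    rw [mul_eq_zero, sub_eq_zero, sub_eq_zero, ← sq,
      sq_eq_sq₀ (hcos_φm.le.trans hcos1) hcos_φm.le, cos_eq_cos_iff_abs_eq hφm_pi habs1]
    simp [hδ.ne']
  · subst h12
    rw [hδ, one_mul, ← sq, ← sq, cos_sq_add_sin_sq]

theorem length_constraint_max_attainment
    (φm φ1 φ2 δ : ℝ) (hφm : 0 < φm) (hφm' : φm ≤ π / 18)
    (h1 : φ1 ∈ Set.Icc (-φm) φm) (h2 : φ2 ∈ Set.Icc (-φm) φm) :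
    (cos δ < 1 →
      (cos δ * cos φ1 * cos φ2 + sin φ1 * sin φ2 = (cos δ - 1) * (cos φm) ^ 2 + 1 ↔
        φ1 = φ2 ∧ |φ1| = φm)) ∧
    (cos δ = 1 → φ1 = φ2 →
      cos δ * cos φ1 * cos φ2 + sin φ1 * sin φ2 = 1) :=
  length_constraint_max_attainment_general φm φ1 φ2 δ hφm' h1 h2
end

section
/- Let r₁, r₂ > 0, let φₘ ∈ (0, π/18], and let φ₁, φ₂ ∈ [-φₘ, φₘ]. Define p_i = (r_i cos(φ_i) sin(θ_i), r_i cos(φ_i) cos(θ_i), r_i sin(φ_i)). Then (r₁² + r₂² - 2r₁r₂·Xₘᵢₙ)^(1/2) ≤ ‖p₁ - p₂‖ ≤ (r₁² + r₂² - 2r₁r₂·Xₘₐₓ)^(1/2), where Xₘᵢₙ = (cos(θ₁-θ₂) - 1)cos²(φₘ) + 1 and Xₘₐₓ = cos(θ₁-θ₂) - (1 + cos(θ₁-θ₂))sin²(φₘ). -/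
open Real

theorem length_constraint_proposition
    (r1 r2 θ1 θ2 φ1 φ2 φm : ℝ)
    (hr1 : 0 < r1) (hr2 : 0 < r2)
    (hφm : 0 < φm) (hφm' : φm ≤ π / 18)
    (h1 : φ1 ∈ Set.Icc (-φm) φm) (h2 : φ2 ∈ Set.Icc (-φm) φm)
    (p1 p2 : EuclideanSpace ℝ (Fin 3))
    (hp1 : p1 = (WithLp.equiv 2 (Fin 3 → ℝ)).symm
      ![r1 * cos φ1 * sin θ1, r1 * cos φ1 * cos θ1, r1 * sin φ1])
    (hp2 : p2 = (WithLp.equiv 2 (Fin 3 → ℝ)).symm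
      ![r2 * cos φ2 * sin θ2, r2 * cos φ2 * cos θ2, r2 * sin φ2])
    (Xmin Xmax : ℝ)
    (hXmin : Xmin = (cos (θ1 - θ2) - 1) * (cos φm) ^ 2 + 1)
    (hXmax : Xmax = cos (θ1 - θ2) - (1 + cos (θ1 - θ2)) * (sin φm) ^ 2) :
    Real.sqrt (r1 ^ 2 + r2 ^ 2 - 2 * r1 * r2 * Xmin) ≤ ‖p1 - p2‖ ∧
    ‖p1 - p2‖ ≤ Real.sqrt (r1 ^ 2 + r2 ^ 2 - 2 * r1 * r2 * Xmax) := by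
  obtain ⟨h1l, h1r⟩ := h1
  obtain ⟨h2l, h2r⟩ := h2
  have hpi : (0:ℝ) < π := Real.pi_pos
  set c := cos (θ1 - θ2) with hc
  set X := cos φ1 * cos φ2 * c + sin φ1 * sin φ2 with hX
  -- norm computation
  have hnorm : ‖p1 - p2‖ = Real.sqrt (r1 ^ 2 + r2 ^ 2 - 2 * r1 * r2 * X) := by
    rw [EuclideanSpace.norm_eq]
    congr 1
    simp only [hp1, hp2, WithLp.equiv_symm_apply, WithLp.ofLp_sub, Fin.sum_univ_three,
      WithLp.ofLp_toLp, Pi.sub_apply, Matrix.cons_val_zero,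
      Matrix.cons_val_one, Matrix.head_cons, Matrix.cons_val_two, Matrix.tail_cons,
      Real.norm_eq_abs, sq_abs]
    rw [hX, hc, Real.cos_sub]
    linear_combination r1^2 * cos φ1^2 * sin_sq_add_cos_sq θ1 +
      r2^2 * cos φ2^2 * sin_sq_add_cos_sq θ2 +
      r1^2 * sin_sq_add_cos_sq φ1 + r2^2 * sin_sq_add_cos_sq φ2
  -- angle bounds
  have h2φm : 2 * φm ≤ π := by nlinarith
  have hsub : cos (2 * φm) ≤ cos (φ1 - φ2) := by
    rw [← Real.cos_abs (φ1 - φ2)]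
    apply Real.cos_le_cos_of_nonneg_of_le_pi (abs_nonneg _) h2φm
    rw [abs_sub_le_iff]; constructor <;> linarith
  have hadd : cos (2 * φm) ≤ cos (φ1 + φ2) := by
    rw [← Real.cos_abs (φ1 + φ2)]
    apply Real.cos_le_cos_of_nonneg_of_le_pi (abs_nonneg _) h2φm
    rw [abs_le]; constructor <;> linarith
  have hsub1 : cos (φ1 - φ2) ≤ 1 := cos_le_one _
  have hadd1 : cos (φ1 + φ2) ≤ 1 := cos_le_one _
  have hc1 : c ≤ 1 := cos_le_one _
  have hc2 : -1 ≤ c := neg_one_le_cos _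
  have h2m : cos (2 * φm) = 1 - 2 * sin φm ^ 2 := by
    rw [Real.cos_two_mul]
    nlinarith [sin_sq_add_cos_sq φm]
  have key1 : Xmin - X = (1 + c) / 2 * (1 - cos (φ1 - φ2)) +
      (1 - c) / 2 * (cos (φ1 + φ2) - cos (2 * φm)) := by
    rw [hXmin, hX, Real.cos_sub φ1 φ2, Real.cos_add φ1 φ2, h2m]
    linear_combination (c - 1) * sin_sq_add_cos_sq φm
  have key2 : X - Xmax = (1 + c) / 2 * (cos (φ1 - φ2) - cos (2 * φm)) +
      (1 - c) / 2 * (1 - cos (φ1 + φ2)) := by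
    rw [hXmax, hX, Real.cos_sub φ1 φ2, Real.cos_add φ1 φ2, h2m]
    ring
  have pa : (0:ℝ) ≤ (1 + c) / 2 * (1 - cos (φ1 - φ2)) :=
    mul_nonneg (by linarith) (by linarith)
  have pb : (0:ℝ) ≤ (1 - c) / 2 * (cos (φ1 + φ2) - cos (2 * φm)) :=
    mul_nonneg (by linarith) (by linarith)
  have pc : (0:ℝ) ≤ (1 + c) / 2 * (cos (φ1 - φ2) - cos (2 * φm)) :=
    mul_nonneg (by linarith) (by linarith)
  have pd : (0:ℝ) ≤ (1 - c) / 2 * (1 - cos (φ1 + φ2)) :=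
    mul_nonneg (by linarith) (by linarith)
  have hXmin' : X ≤ Xmin := by linarith
  have hXmax' : Xmax ≤ X := by linarith
  have hrr : 0 < r1 * r2 := mul_pos hr1 hr2
  have m1 : 0 ≤ r1 * r2 * (Xmin - X) := mul_nonneg hrr.le (by linarith)
  have m2 : 0 ≤ r1 * r2 * (X - Xmax) := mul_nonneg hrr.le (by linarith)
  rw [hnorm]
  exact ⟨Real.sqrt_le_sqrt (by linarith), Real.sqrt_le_sqrt (by linarith)⟩
end
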